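/- Let X and V be nonempty finite types and let Z := X × V be the discrete phase space. Let π̄₁, π̄₂ : Z × Z → ℝ be everywhere positive probability densities and ρ : X → ℝ a probability density. Set m₁(z) := Σ_{z' ∈ Z} π̄₁(z', z) and m₂(z) := Σ_{z' ∈ Z} π̄₂(z, z') for z ∈ Z, and for z = (x,v) set G(x,v) := √(m₁(x,v) m₂(x,v)). Call a pair (π₁, π₂) of probability densities on Z × Z feasible if there is a function μ : Z → ℝ with Σ_{z'} π₁(z', z) = μ(z) = Σ_{z'} π₂(z, z') for all z ∈ Z, and Σ_{v ∈ V} μ(x,v) = ρ(x) for all x ∈ X. Define μ*(x,v) := ρ(x) G(x,v) / Σ_{v' ∈ V} G(x,v'), π₁*(z', z) := π̄₁(z', z) μ*(z)/m₁(z), and π₂*(z, z') := π̄₂(z, z') μ*(z)/m₂(z). Then (π₁*, π₂*) is feasible, and for every feasible pair (π₁, π₂) one has KL(π₁ ‖ π̄₁) + KL(π₂ ‖ π̄₂) ≥ KL(π₁* ‖ π̄₁) + KL(π₂* ‖ π̄₂), with equality if and only if (π₁, π₂) = (π₁*, π₂*); i.e., (π₁*, π₂*) is the unique KL-projection of (π̄₁,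 π̄₂) onto the constraint that the two couplings share a common intermediate phase-space marginal whose position marginal equals ρ. -/

import Mathlib

/-- A probability density on a finite type. -/
def IsProbDensity {S : Type*} [Fintype S] (α : S → ℝ) : Prop :=
  (∀ s, 0 ≤ α s) ∧ (∑ s, α s) = 1

/-- Relative entropy of densities on a finite type (with the convention `0 log 0 = 0`,
which holds automatically since `Real.log 0 = 0`). -/
noncomputable def KL {S : Type*} [Fintype S] (α β : S → ℝ) : ℝ :=
  ∑ s, α s * Real.log (α s / β s)

/-!
Rescaling the rows of a positive prior `κ` to a marginal `ν` gives the Pythagorean identity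
`KL(γ‖κ) = KL(γ*‖κ) + KL(γ‖γ*) + ∑ z, (μ z - ν z) * log (ν z / m z)`, where `μ` and `m` are
the marginals of `γ` and `κ`. For the two couplings, with common intermediate marginal
`ν = μ*`, the linear terms add up to `∑ z, (μ z - μ* z) * 2 * log (ρ x / ∑ v, G (x, v))`, because
`μ* ∝ ρ · √(m₁ m₂)`; this depends on the position `x` only, so it vanishes as soon as `μ` and
`μ*` have the same position marginal `ρ`. What remains, `KL(π₁‖π₁*) + KL(π₂‖π₂*)`, is
nonnegative and vanishes only at `(π₁*, π₂*)` by Gibbs' inequality. The coupling `π₁`, whose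
intermediate marginal is its second one, is brought to this form by `Prod.swap`.
-/

open Finset Real InformationTheory

section KL

lemma IsProbDensity.comp_swap {A B : Type*} [Fintype A] [Fintype B] {α : A × B → ℝ}
    (h : IsProbDensity α) : IsProbDensity (α ∘ Prod.swap) :=
  ⟨fun p => h.1 p.swap, ((Equiv.prodComm B A).sum_comp α).trans h.2⟩

lemma KL_comp_swap {A B : Type*} [Fintype A] [Fintype B] (α β : A × B → ℝ) :
    KL (α ∘ Prod.swap) (β ∘ Prod.swap) = KL α β :=
  (Equiv.prodComm B A).sum_comp fun p => α p * log (α p / β p)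

lemma comp_swap_eq_iff {A B C : Type*} {f : A × B → C} {g : B × A → C} :
    f ∘ Prod.swap = g ↔ f = g ∘ Prod.swap := by
  constructor <;> rintro rfl <;> rfl

variable {S : Type*} [Fintype S] {α β : S → ℝ}

lemma KL_eq_sum_mul_klFun (hsum : ∑ s, α s = ∑ s, β s) (hac : ∀ s, β s = 0 → α s = 0) :
    KL α β = ∑ s, β s * klFun (α s / β s) := by
  have hterm : ∀ s, α s * log (α s / β s) = β s * klFun (α s / β s) + (α s - β s) := by
    intro s
    rcases eq_or_ne (β s) 0 with h | h
    · simp [h, hac s h]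
    · rw [klFun_apply]; field_simp; ring
  rw [KL, sum_congr rfl fun s _ => hterm s, sum_add_distrib, sum_sub_distrib, hsum, sub_self,
    add_zero]

lemma KL_nonneg (hα : ∀ s, 0 ≤ α s) (hβ : ∀ s, 0 ≤ β s) (hsum : ∑ s, α s = ∑ s, β s)
    (hac : ∀ s, β s = 0 → α s = 0) : 0 ≤ KL α β := by
  rw [KL_eq_sum_mul_klFun hsum hac]
  exact sum_nonneg fun s _ => mul_nonneg (hβ s) (klFun_nonneg (div_nonneg (hα s) (hβ s)))

lemma KL_eq_zero_iff (hα : ∀ s, 0 ≤ α s) (hβ : ∀ s, 0 ≤ β s) (hsum : ∑ s, α s = ∑ s, β s)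
    (hac : ∀ s, β s = 0 → α s = 0) : KL α β = 0 ↔ α = β := by
  rw [KL_eq_sum_mul_klFun hsum hac, sum_eq_zero_iff_of_nonneg fun s _ =>
    mul_nonneg (hβ s) (klFun_nonneg (div_nonneg (hα s) (hβ s))), funext_iff]
  refine forall_congr' fun s => ?_
  rw [mul_eq_zero, klFun_eq_zero_iff (div_nonneg (hα s) (hβ s))]
  rcases eq_or_ne (β s) 0 with h | h
  · simp [h, hac s h]
  · simp [h, div_eq_one_iff_eq h]

end KL

section Marginal

variable {A B : Type*} [Fintype B] {γ κ : A × B → ℝ} {ν : A → ℝ}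

def fstMarginal (γ : A × B → ℝ) (a : A) : ℝ := ∑ b, γ (a, b)

noncomputable def rescaleFst (γ : A × B → ℝ) (ν : A → ℝ) (p : A × B) : ℝ :=
  γ p * ν p.1 / fstMarginal γ p.1

lemma sum_fstMarginal [Fintype A] (γ : A × B → ℝ) : ∑ a, fstMarginal γ a = ∑ p, γ p :=
  (Fintype.sum_prod_type γ).symm

lemma sum_mul_comp_fst [Fintype A] (γ : A × B → ℝ) (c : A → ℝ) :
    ∑ p, γ p * c p.1 = ∑ a, fstMarginal γ a * c a := by
  simp only [Fintype.sum_prod_type, fstMarginal, sum_mul]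

lemma fstMarginal_sub (γ γ' : A × B → ℝ) : fstMarginal (γ - γ') = fstMarginal γ - fstMarginal γ' :=
  funext fun _ => sum_sub_distrib ..

lemma fstMarginal_nonneg (hγ : ∀ p, 0 ≤ γ p) (a : A) : 0 ≤ fstMarginal γ a :=
  sum_nonneg fun b _ => hγ (a, b)

lemma fstMarginal_pos [Nonempty B] (hγ : ∀ p, 0 < γ p) (a : A) : 0 < fstMarginal γ a :=
  sum_pos (fun b _ => hγ (a, b)) univ_nonempty

lemma eq_zero_of_fstMarginal_eq_zero (hγ : ∀ p, 0 ≤ γ p) {a : A} (h : fstMarginal γ a = 0)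
    (b : B) : γ (a, b) = 0 :=
  (sum_eq_zero_iff_of_nonneg fun b _ => hγ (a, b)).1 h b (mem_univ b)

lemma fstMarginal_rescaleFst (hγ : ∀ a, fstMarginal γ a ≠ 0) :
    fstMarginal (rescaleFst γ ν) = ν := by
  funext a
  simp only [fstMarginal, rescaleFst, ← sum_div, ← sum_mul]
  exact mul_div_cancel_left₀ _ (hγ a)

lemma rescaleFst_nonneg (hγ : ∀ p, 0 ≤ γ p) (hν : ∀ a, 0 ≤ ν a) (p : A × B) :
    0 ≤ rescaleFst γ ν p :=
  div_nonneg (mul_nonneg (hγ p) (hν p.1)) (fstMarginal_nonneg hγ p.1)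

lemma isProbDensity_rescaleFst [Fintype A] (hγ : ∀ p, 0 ≤ γ p) (hγ' : ∀ a, fstMarginal γ a ≠ 0)
    (hν : IsProbDensity ν) : IsProbDensity (rescaleFst γ ν) :=
  ⟨rescaleFst_nonneg hγ hν.1, by rw [← sum_fstMarginal, fstMarginal_rescaleFst hγ', hν.2]⟩

lemma eq_zero_of_rescaleFst_eq_zero {p : A × B} (hγ : γ p ≠ 0) (hγ' : fstMarginal γ p.1 ≠ 0)
    (h : rescaleFst γ ν p = 0) : ν p.1 = 0 := by
  simpa [rescaleFst, hγ, hγ'] using h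

lemma mul_log_div_eq_of_rescale {p q c : ℝ} (hq : q ≠ 0) (hc : c = 0 → p = 0) :
    p * log (p / q) = q * c * log (q * c / q) + p * log (p / (q * c)) + (p - q * c) * log c := by
  rcases eq_or_ne c 0 with rfl | hc0
  · simp [hc rfl]
  rcases eq_or_ne p 0 with rfl | hp0
  · rw [mul_div_cancel_left₀ _ hq]; ring
  rw [mul_div_cancel_left₀ _ hq, log_div hp0 hq, log_div hp0 (mul_ne_zero hq hc0),
    log_mul hq hc0]
  ring

theorem KL_eq_KL_rescaleFst_add [Fintype A] (hκ : ∀ p, κ p ≠ 0) (hκ' : ∀ a, fstMarginal κ a ≠ 0)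
    (hac : ∀ p, ν p.1 = 0 → γ p = 0) :
    KL γ κ = KL (rescaleFst κ ν) κ + KL γ (rescaleFst κ ν)
      + ∑ a, (fstMarginal γ a - ν a) * log (ν a / fstMarginal κ a) := by
  have hterm : ∀ p, γ p * log (γ p / κ p) =
      rescaleFst κ ν p * log (rescaleFst κ ν p / κ p) + γ p * log (γ p / rescaleFst κ ν p)
        + (γ - rescaleFst κ ν) p * log (ν p.1 / fstMarginal κ p.1) := by
    intro p
    rw [Pi.sub_apply, rescaleFst, mul_div_assoc]
    exact mul_log_div_eq_of_rescale (hκ p) fun h =>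
      hac p ((div_eq_zero_iff.1 h).resolve_right (hκ' p.1))
  rw [KL, sum_congr rfl fun p _ => hterm p, sum_add_distrib, sum_add_distrib,
    sum_mul_comp_fst (γ - rescaleFst κ ν) fun a => log (ν a / fstMarginal κ a),
    fstMarginal_sub, fstMarginal_rescaleFst hκ']
  rfl

lemma KL_rescaleFst_nonneg_and_eq_zero_iff [Fintype A] [Nonempty B] (hγ : ∀ p, 0 ≤ γ p)
    (hκ : ∀ p, 0 < κ p) (hν : ∀ a, 0 ≤ ν a) (hsum : ∑ p, γ p = ∑ a, ν a)
    (hac : ∀ p, ν p.1 = 0 → γ p = 0) :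
    0 ≤ KL γ (rescaleFst κ ν) ∧ (KL γ (rescaleFst κ ν) = 0 ↔ γ = rescaleFst κ ν) := by
  have hκ' : ∀ a, fstMarginal κ a ≠ 0 := fun a => (fstMarginal_pos hκ a).ne'
  have hsum' : ∑ p, γ p = ∑ p, rescaleFst κ ν p := by
    rw [← sum_fstMarginal (rescaleFst κ ν), fstMarginal_rescaleFst hκ', hsum]
  have hac' : ∀ p, rescaleFst κ ν p = 0 → γ p = 0 := fun p h =>
    hac p (eq_zero_of_rescaleFst_eq_zero (hκ p).ne' (hκ' p.1) h)
  have hnn := rescaleFst_nonneg (fun p => (hκ p).le) hν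
  exact ⟨KL_nonneg hγ hnn hsum' hac', KL_eq_zero_iff hγ hnn hsum' hac'⟩

end Marginal

lemma log_sqrt_mul_mul_div_add {m₁ m₂ : ℝ} (h₁ : 0 < m₁) (h₂ : 0 < m₂) (t : ℝ) :
    log (√(m₁ * m₂) * t / m₁) + log (√(m₁ * m₂) * t / m₂) = 2 * log t := by
  rcases eq_or_ne t 0 with rfl | ht
  · simp
  have hg : √(m₁ * m₂) ≠ 0 := (sqrt_pos.2 (mul_pos h₁ h₂)).ne'
  rw [log_div (mul_ne_zero hg ht) h₁.ne', log_div (mul_ne_zero hg ht) h₂.ne', log_mul hg ht,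
    log_sqrt (mul_pos h₁ h₂).le, log_mul h₁.ne' h₂.ne']
  ring

section Projection

variable {X V W₁ W₂ : Type*} [Fintype V] [Fintype W₁] [Fintype W₂]
  {κ₁ : (X × V) × W₁ → ℝ} {κ₂ : (X × V) × W₂ → ℝ} {ρ : X → ℝ}

noncomputable def geomMeanFst {Z : Type*} (κ₁ : Z × W₁ → ℝ) (κ₂ : Z × W₂ → ℝ) (z : Z) : ℝ :=
  √(fstMarginal κ₁ z * fstMarginal κ₂ z)

noncomputable def geomMeanMarginal (κ₁ : (X × V) × W₁ → ℝ) (κ₂ : (X × V) × W₂ → ℝ)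
    (ρ : X → ℝ) : X × V → ℝ :=
  rescaleFst (geomMeanFst κ₁ κ₂) ρ

lemma geomMeanMarginal_nonneg (hρ : ∀ x, 0 ≤ ρ x) (z : X × V) :
    0 ≤ geomMeanMarginal κ₁ κ₂ ρ z :=
  rescaleFst_nonneg (fun _ => sqrt_nonneg _) hρ z

variable [Nonempty W₁] [Nonempty W₂]

lemma geomMeanFst_pos {Z : Type*} {κ₁ : Z × W₁ → ℝ} {κ₂ : Z × W₂ → ℝ} (hκ₁ : ∀ p, 0 < κ₁ p)
    (hκ₂ : ∀ p, 0 < κ₂ p) (z : Z) : 0 < geomMeanFst κ₁ κ₂ z :=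
  sqrt_pos.2 (mul_pos (fstMarginal_pos hκ₁ z) (fstMarginal_pos hκ₂ z))

lemma fstMarginal_geomMeanMarginal [Nonempty V] (hκ₁ : ∀ p, 0 < κ₁ p) (hκ₂ : ∀ p, 0 < κ₂ p) :
    fstMarginal (geomMeanMarginal κ₁ κ₂ ρ) = ρ :=
  fstMarginal_rescaleFst fun x => (fstMarginal_pos (geomMeanFst_pos hκ₁ hκ₂) x).ne'

lemma isProbDensity_geomMeanMarginal [Fintype X] [Nonempty V] (hκ₁ : ∀ p, 0 < κ₁ p)
    (hκ₂ : ∀ p, 0 < κ₂ p) (hρ : IsProbDensity ρ) :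
    IsProbDensity (geomMeanMarginal κ₁ κ₂ ρ) :=
  isProbDensity_rescaleFst (fun _ => sqrt_nonneg _)
    (fun x => (fstMarginal_pos (geomMeanFst_pos hκ₁ hκ₂) x).ne') hρ

lemma eq_zero_of_geomMeanMarginal_eq_zero [Nonempty V] {W : Type*} [Fintype W]
    (hκ₁ : ∀ p, 0 < κ₁ p) (hκ₂ : ∀ p, 0 < κ₂ p) {γ : (X × V) × W → ℝ} (hγ : ∀ p, 0 ≤ γ p)
    (hγρ : fstMarginal (fstMarginal γ) = ρ) (p : (X × V) × W)
    (hp : geomMeanMarginal κ₁ κ₂ ρ p.1 = 0) : γ p = 0 := by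
  have hρ : ρ p.1.1 = 0 := eq_zero_of_rescaleFst_eq_zero (geomMeanFst_pos hκ₁ hκ₂ p.1).ne'
    (fstMarginal_pos (geomMeanFst_pos hκ₁ hκ₂) p.1.1).ne' hp
  have hμ : fstMarginal γ p.1 = 0 :=
    eq_zero_of_fstMarginal_eq_zero (fstMarginal_nonneg hγ) (hγρ ▸ hρ) p.1.2
  exact eq_zero_of_fstMarginal_eq_zero hγ hμ p.2

lemma sum_sub_geomMeanMarginal_mul_log_add_eq_zero [Fintype X] [Nonempty V]
    (hκ₁ : ∀ p, 0 < κ₁ p) (hκ₂ : ∀ p, 0 < κ₂ p) {μ : X × V → ℝ} (hμ : fstMarginal μ = ρ) :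
    ∑ z, (μ z - geomMeanMarginal κ₁ κ₂ ρ z) *
        log (geomMeanMarginal κ₁ κ₂ ρ z / fstMarginal κ₁ z)
      + ∑ z, (μ z - geomMeanMarginal κ₁ κ₂ ρ z) *
        log (geomMeanMarginal κ₁ κ₂ ρ z / fstMarginal κ₂ z) = 0 := by
  have hlog : ∀ z, log (geomMeanMarginal κ₁ κ₂ ρ z / fstMarginal κ₁ z)
      + log (geomMeanMarginal κ₁ κ₂ ρ z / fstMarginal κ₂ z)
        = 2 * log (ρ z.1 / fstMarginal (geomMeanFst κ₁ κ₂) z.1) :=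
    fun z => by
      rw [geomMeanMarginal, rescaleFst, geomMeanFst, mul_div_assoc]
      exact log_sqrt_mul_mul_div_add (fstMarginal_pos hκ₁ z) (fstMarginal_pos hκ₂ z) _
  rw [← sum_add_distrib]
  simp only [← mul_add, hlog]
  calc _ = ∑ x, fstMarginal (μ - geomMeanMarginal κ₁ κ₂ ρ) x
          * (2 * log (ρ x / fstMarginal (geomMeanFst κ₁ κ₂) x)) :=
        sum_mul_comp_fst _ fun x => 2 * log (ρ x / fstMarginal (geomMeanFst κ₁ κ₂) x)
    _ = 0 := by simp [fstMarginal_sub, hμ, fstMarginal_geomMeanMarginal hκ₁ hκ₂]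

theorem KL_add_KL_eq_KL_rescaleFst_add [Fintype X] [Nonempty V] (hκ₁ : ∀ p, 0 < κ₁ p)
    (hκ₂ : ∀ p, 0 < κ₂ p) {γ₁ : (X × V) × W₁ → ℝ} {γ₂ : (X × V) × W₂ → ℝ}
    (hγ₁ : ∀ p, 0 ≤ γ₁ p) (hγ₂ : ∀ p, 0 ≤ γ₂ p) (h₁₂ : fstMarginal γ₁ = fstMarginal γ₂)
    (hρ : fstMarginal (fstMarginal γ₁) = ρ) :
    KL γ₁ κ₁ + KL γ₂ κ₂ =
      KL (rescaleFst κ₁ (geomMeanMarginal κ₁ κ₂ ρ)) κ₁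
        + KL (rescaleFst κ₂ (geomMeanMarginal κ₁ κ₂ ρ)) κ₂
        + (KL γ₁ (rescaleFst κ₁ (geomMeanMarginal κ₁ κ₂ ρ))
          + KL γ₂ (rescaleFst κ₂ (geomMeanMarginal κ₁ κ₂ ρ))) := by
  have hcross := sum_sub_geomMeanMarginal_mul_log_add_eq_zero hκ₁ hκ₂ hρ
  rw [KL_eq_KL_rescaleFst_add (fun p => (hκ₁ p).ne') (fun z => (fstMarginal_pos hκ₁ z).ne')
      (eq_zero_of_geomMeanMarginal_eq_zero hκ₁ hκ₂ hγ₁ hρ),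
    KL_eq_KL_rescaleFst_add (fun p => (hκ₂ p).ne') (fun z => (fstMarginal_pos hκ₂ z).ne')
      (eq_zero_of_geomMeanMarginal_eq_zero hκ₁ hκ₂ hγ₂ (h₁₂ ▸ hρ)), ← h₁₂]
  linarith

theorem rescaleFst_geomMeanMarginal_unique_KL_minimizer [Fintype X] [Nonempty V]
    (hκ₁ : ∀ p, 0 < κ₁ p) (hκ₂ : ∀ p, 0 < κ₂ p) (hρ : ∀ x, 0 ≤ ρ x)
    {γ₁ : (X × V) × W₁ → ℝ} {γ₂ : (X × V) × W₂ → ℝ}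
    (hγ₁ : ∀ p, 0 ≤ γ₁ p) (hγ₂ : ∀ p, 0 ≤ γ₂ p) (h₁₂ : fstMarginal γ₁ = fstMarginal γ₂)
    (hγρ : fstMarginal (fstMarginal γ₁) = ρ) :
    KL (rescaleFst κ₁ (geomMeanMarginal κ₁ κ₂ ρ)) κ₁
        + KL (rescaleFst κ₂ (geomMeanMarginal κ₁ κ₂ ρ)) κ₂ ≤ KL γ₁ κ₁ + KL γ₂ κ₂ ∧
      (KL γ₁ κ₁ + KL γ₂ κ₂ = KL (rescaleFst κ₁ (geomMeanMarginal κ₁ κ₂ ρ)) κ₁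
          + KL (rescaleFst κ₂ (geomMeanMarginal κ₁ κ₂ ρ)) κ₂ ↔
        γ₁ = rescaleFst κ₁ (geomMeanMarginal κ₁ κ₂ ρ) ∧
          γ₂ = rescaleFst κ₂ (geomMeanMarginal κ₁ κ₂ ρ)) := by
  have hγρ₂ : fstMarginal (fstMarginal γ₂) = ρ := h₁₂ ▸ hγρ
  have hsumμ : ∑ z, geomMeanMarginal κ₁ κ₂ ρ z = ∑ x, ρ x := by
    rw [← sum_fstMarginal, fstMarginal_geomMeanMarginal hκ₁ hκ₂]
  obtain ⟨hnn₁, heq₁⟩ := KL_rescaleFst_nonneg_and_eq_zero_iff hγ₁ hκ₁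
    (geomMeanMarginal_nonneg hρ) (by rw [hsumμ, ← hγρ, sum_fstMarginal, sum_fstMarginal])
    (eq_zero_of_geomMeanMarginal_eq_zero hκ₁ hκ₂ hγ₁ hγρ)
  obtain ⟨hnn₂, heq₂⟩ := KL_rescaleFst_nonneg_and_eq_zero_iff hγ₂ hκ₂
    (geomMeanMarginal_nonneg hρ) (by rw [hsumμ, ← hγρ₂, sum_fstMarginal, sum_fstMarginal])
    (eq_zero_of_geomMeanMarginal_eq_zero hκ₁ hκ₂ hγ₂ hγρ₂)
  rw [KL_add_KL_eq_KL_rescaleFst_add hκ₁ hκ₂ hγ₁ hγ₂ h₁₂ hγρ, ← heq₁, ← heq₂]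
  constructor
  · linarith
  · constructor
    · intro h; constructor <;> linarith
    · rintro ⟨h₁, h₂⟩; rw [h₁, h₂]; ring

end Projection

theorem kl_projection_intermediate_marginal_general
    (X V : Type*) [Fintype X] [Fintype V] [Nonempty X] [Nonempty V]
    (pibar₁ pibar₂ : (X × V) × (X × V) → ℝ)
    (h₁pos : ∀ p, 0 < pibar₁ p)
    (h₂pos : ∀ p, 0 < pibar₂ p)
    (ρ : X → ℝ) (hρ : IsProbDensity ρ)
    (m₁ m₂ G μstar : X × V → ℝ)
    (hm₁ : m₁ = fun z => ∑ z' : X × V, pibar₁ (z', z))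
    (hm₂ : m₂ = fun z => ∑ z' : X × V, pibar₂ (z, z'))
    (hG : G = fun z => Real.sqrt (m₁ z * m₂ z))
    (hμstar : μstar = fun z => ρ z.1 * G z / (∑ v' : V, G (z.1, v')))
    (pistar₁ pistar₂ : (X × V) × (X × V) → ℝ)
    (hpistar₁ : pistar₁ = fun p => pibar₁ p * μstar p.2 / m₁ p.2)
    (hpistar₂ : pistar₂ = fun p => pibar₂ p * μstar p.1 / m₂ p.1) :
    (IsProbDensity pistar₁ ∧ IsProbDensity pistar₂ ∧
      (∀ z : X × V, (∑ z' : X × V, pistar₁ (z', z)) = μstar z ∧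
        (∑ z' : X × V, pistar₂ (z, z')) = μstar z) ∧
      (∀ x : X, (∑ v : V, μstar (x, v)) = ρ x)) ∧
    ∀ π₁ π₂ : (X × V) × (X × V) → ℝ,
      IsProbDensity π₁ → IsProbDensity π₂ →
      (∃ μ : X × V → ℝ,
        (∀ z : X × V, (∑ z' : X × V, π₁ (z', z)) = μ z ∧
          (∑ z' : X × V, π₂ (z, z')) = μ z) ∧
        (∀ x : X, (∑ v : V, μ (x, v)) = ρ x)) →
      (KL pistar₁ pibar₁ + KL pistar₂ pibar₂ ≤ KL π₁ pibar₁ + KL π₂ pibar₂ ∧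
        (KL π₁ pibar₁ + KL π₂ pibar₂ = KL pistar₁ pibar₁ + KL pistar₂ pibar₂ ↔
          π₁ = pistar₁ ∧ π₂ = pistar₂)) := by
  set κ₁ := pibar₁ ∘ Prod.swap
  have hκ₁ : ∀ p, 0 < κ₁ p := fun p => h₁pos p.swap
  obtain rfl : μstar = geomMeanMarginal κ₁ pibar₂ ρ := by
    subst_vars; funext z; exact congrArg (· / _) (mul_comm _ _)
  obtain rfl : pistar₁ = rescaleFst κ₁ (geomMeanMarginal κ₁ pibar₂ ρ) ∘ Prod.swap := by
    subst_vars; rfl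
  obtain rfl : pistar₂ = rescaleFst pibar₂ (geomMeanMarginal κ₁ pibar₂ ρ) := by
    subst_vars; rfl
  have hμstar := isProbDensity_geomMeanMarginal hκ₁ h₂pos hρ
  have hne₁ : ∀ z, fstMarginal κ₁ z ≠ 0 := fun z => (fstMarginal_pos hκ₁ z).ne'
  have hne₂ : ∀ z, fstMarginal pibar₂ z ≠ 0 := fun z => (fstMarginal_pos h₂pos z).ne'
  refine ⟨⟨(isProbDensity_rescaleFst (fun p => (hκ₁ p).le) hne₁ hμstar).comp_swap,
    isProbDensity_rescaleFst (fun p => (h₂pos p).le) hne₂ hμstar,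
    fun z => ⟨congrFun (fstMarginal_rescaleFst hne₁) z, congrFun (fstMarginal_rescaleFst hne₂) z⟩,
    congrFun (fstMarginal_geomMeanMarginal hκ₁ h₂pos)⟩, ?_⟩
  rintro π₁ π₂ hπ₁ hπ₂ ⟨μ, hμ, hμρ⟩
  have h₁₂ : fstMarginal (π₁ ∘ Prod.swap) = fstMarginal π₂ :=
    funext fun z => (hμ z).1.trans (hμ z).2.symm
  have hρ' : fstMarginal (fstMarginal (π₁ ∘ Prod.swap)) = ρ :=
    funext fun x => (sum_congr rfl fun v _ => (hμ (x, v)).1).trans (hμρ x)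
  rw [← KL_comp_swap π₁ pibar₁, ← KL_comp_swap (_ ∘ Prod.swap) pibar₁, ← comp_swap_eq_iff,
    Function.comp_assoc, Prod.swap_swap_eq, Function.comp_id]
  exact rescaleFst_geomMeanMarginal_unique_KL_minimizer hκ₁ h₂pos hρ.1 hπ₁.comp_swap.1 hπ₂.1 h₁₂ hρ'

/-- KL-projection at an intermediate time point: the explicit pair `(π₁*, π₂*)` built from the
geometric mean `G = √(m₁ m₂)` of the marginals of the priors is the unique minimizer of
`KL(π₁‖π̄₁) + KL(π₂‖π̄₂)` over pairs of couplings sharing a common intermediate phase-space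
marginal whose position marginal equals `ρ`. -/
theorem kl_projection_intermediate_marginal
    (X V : Type*) [Fintype X] [Fintype V] [Nonempty X] [Nonempty V]
    (pibar₁ pibar₂ : (X × V) × (X × V) → ℝ)
    (h₁ : IsProbDensity pibar₁) (h₁pos : ∀ p, 0 < pibar₁ p)
    (h₂ : IsProbDensity pibar₂) (h₂pos : ∀ p, 0 < pibar₂ p)
    (ρ : X → ℝ) (hρ : IsProbDensity ρ)
    (m₁ m₂ G μstar : X × V → ℝ)
    (hm₁ : m₁ = fun z => ∑ z' : X × V, pibar₁ (z', z))
    (hm₂ : m₂ = fun z => ∑ z' : X × V, pibar₂ (z, z'))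
    (hG : G = fun z => Real.sqrt (m₁ z * m₂ z))
    (hμstar : μstar = fun z => ρ z.1 * G z / (∑ v' : V, G (z.1, v')))
    (pistar₁ pistar₂ : (X × V) × (X × V) → ℝ)
    (hpistar₁ : pistar₁ = fun p => pibar₁ p * μstar p.2 / m₁ p.2)
    (hpistar₂ : pistar₂ = fun p => pibar₂ p * μstar p.1 / m₂ p.1) :
    (IsProbDensity pistar₁ ∧ IsProbDensity pistar₂ ∧
      (∀ z : X × V, (∑ z' : X × V, pistar₁ (z', z)) = μstar z ∧
        (∑ z' : X × V, pistar₂ (z, z')) = μstar z) ∧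
      (∀ x : X, (∑ v : V, μstar (x, v)) = ρ x)) ∧
    ∀ π₁ π₂ : (X × V) × (X × V) → ℝ,
      IsProbDensity π₁ → IsProbDensity π₂ →
      (∃ μ : X × V → ℝ,
        (∀ z : X × V, (∑ z' : X × V, π₁ (z', z)) = μ z ∧
          (∑ z' : X × V, π₂ (z, z')) = μ z) ∧
        (∀ x : X, (∑ v : V, μ (x, v)) = ρ x)) →
      (KL pistar₁ pibar₁ + KL pistar₂ pibar₂ ≤ KL π₁ pibar₁ + KL π₂ pibar₂ ∧
        (KL π₁ pibar₁ + KL π₂ pibar₂ = KL pistar₁ pibar₁ + KL pistar₂ pibar₂ ↔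
          π₁ = pistar₁ ∧ π₂ = pistar₂)) :=
  kl_projection_intermediate_marginal_general X V pibar₁ pibar₂ h₁pos h₂pos ρ hρ m₁ m₂ G μstar hm₁
    hm₂ hG hμstar pistar₁ pistar₂ hpistar₁ hpistar₂
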